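/- Let i ≥ 1 and let w be a word belonging to J_l for some l ≥ 1. Then β_{i+4}(w a_1 a_2 ⋯ a_i) = 2i + 3. (Lemma 5.5(i) of the paper.) -/
import Mathlib


/-- The Jacquard languages: `Jacquard 0 = {ε}`, `Jacquard 1 = {a₀}`, and, for `n ≥ 2`,
`Jacquard n = Jacquard (n-1)·a₀ ∪ ⋃_{1 ≤ j ≤ n-1} Jacquard (n-j)·(a₁a₂⋯a_j)`,
where a letter `a_j` is modeled by the natural number `j` and a word by a list. -/
def Jacquard : ℕ → Set (List ℕ)
  | 0 => {[]}
  | 1 => {[0]}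
  | n + 2 =>
      ((· ++ [0]) '' Jacquard (n + 1)) ∪
        ⋃ (j : ℕ) (_ : 1 ≤ j ∧ j ≤ n + 1),
          (· ++ (List.range j).map (· + 1)) '' Jacquard (n + 2 - j)
  termination_by n => n
  decreasing_by all_goals omega

/-- Jean's functions `β_i` on words (the shift `w'` of a word is `w.dropLast`):
`β₂ = 1`, `β₃ = 2`, `β₄ = 3`, and, for `i ≥ 5`,
`β_i(w) = β_{i-1}(w') + β_{i-2}(w'')` if the last letter of `w` is `a₁`,
`β_i(w) = 2β_{i-1}(w') - β_{i-2}(w'')` if the last letter of `w` is `a_k`, `k ≥ 2`,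
`β_i(w) = β_{i-1}(w') + 1` otherwise (i.e. `w` empty or ending with `a₀`).
(The unused values `β₀` and `β₁` are set to `0`.) -/
def beta : ℕ → List ℕ → ℤ
  | 0, _ => 0
  | 1, _ => 0
  | 2, _ => 1
  | 3, _ => 2
  | 4, _ => 3
  | i + 5, w =>
      match w.getLast? with
      | some 1 => beta (i + 4) w.dropLast + beta (i + 3) w.dropLast.dropLast
      | some (_ + 2) => 2 * beta (i + 4) w.dropLast - beta (i + 3) w.dropLast.dropLast
      | _ => beta (i + 4) w.dropLast + 1
lemma beta_concat_one (i : ℕ) (w : List ℕ) :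
    beta (i+5) (w ++ [1]) = beta (i+4) w + beta (i+3) w.dropLast := by
  conv_lhs => rw [beta]
  rw [List.getLast?_concat, List.dropLast_concat]

lemma beta_concat_ge2 (i k : ℕ) (w : List ℕ) :
    beta (i+5) (w ++ [k+2]) = 2 * beta (i+4) w - beta (i+3) w.dropLast := by
  conv_lhs => rw [beta]
  rw [List.getLast?_concat, List.dropLast_concat]

lemma suffix_succ (i : ℕ) (w : List ℕ) :
    w ++ (List.range (i+1)).map (· + 1) = (w ++ (List.range i).map (· + 1)) ++ [i+1] := by
  simp [List.range_succ]

lemma key : ∀ i : ℕ, ∀ w : List ℕ,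
    beta (i+5) (w ++ (List.range (i+1)).map (· + 1)) = 2*(i:ℤ)+5 := by
  intro i
  induction i using Nat.strong_induction_on with
  | _ i ih =>
    match i with
    | 0 =>
      intro w
      rw [suffix_succ]
      simp only [List.range_zero, List.map_nil, List.append_nil]
      rw [show (0:ℕ)+1 = 1 from rfl, beta_concat_one]
      norm_num [beta]
    | 1 =>
      intro w
      rw [suffix_succ]
      have hr : (List.range 1).map (· + 1) = [1] := rfl
      rw [hr, show (1:ℕ)+1 = 0+2 from rfl, beta_concat_ge2, List.dropLast_concat,
        show (1:ℕ)+4 = 0+5 from rfl, beta_concat_one]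
      norm_num [beta]
    | (k+2) =>
      intro w
      rw [suffix_succ, show k+2+1 = k+1+2 from rfl, beta_concat_ge2]
      have hd : (w ++ (List.range (k+2)).map (· + 1)).dropLast
          = w ++ (List.range (k+1)).map (· + 1) := by
        rw [show k+2 = (k+1)+1 from rfl, suffix_succ (k+1) w, List.dropLast_concat]
      rw [hd]
      have h1 := ih (k+1) (by omega) w
      rw [show k+1+1 = k+2 from rfl] at h1
      rw [show k+2+4 = k+1+5 from rfl, show k+2+3 = k+5 from rfl, h1, ih k (by omega) w]
      push_cast; ring

/-- Lemma 5.5(i): for `i ≥ 1` and any word `w` in some Jacquard language `J_l`, `l ≥ 1`,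
`β_{i+4}(w a₁a₂⋯a_i) = 2i + 3`. -/
theorem beta_append_ones (i : ℕ) (hi : 1 ≤ i) (l : ℕ) (hl : 1 ≤ l)
    (w : List ℕ) (hw : w ∈ Jacquard l) :
    beta (i + 4) (w ++ (List.range i).map (· + 1)) = 2 * (i : ℤ) + 3 := by
  obtain ⟨j, rfl⟩ := Nat.exists_eq_add_of_le hi
  have h := key j w
  rw [show 1 + j = j + 1 by ring, show j+1+4 = j+5 from rfl, h]
  push_cast; ring
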